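/- arXiv:2507.01898 — 3 statements merged into one kernel-verified Lean document; each statement's English description precedes it below -/
import Mathlib

section
/- For every integer n ≥ 5 with n ≡ 2 (mod 3), the Frobenius number of S(n) = ⟨f_n², f_{n+1}², f_{n+2}²⟩ equals (f_{n+2} − 1)·f_{n+1}² + (f_{n−2}/2 − 1)·f_{n+2}² − f_n²; that is, this integer does not belong to S(n) and every strictly larger integer belongs to S(n). (Note that f_{n+1} and f_{n−2} are even when n ≡ 2 (mod 3).) -/
/-!
Put `2E = f_{n-2}` and `G = f_{n-1}`, so that `a = f_n² = (2E+G)²`, `b = f_{n+1}² = (2E+2G)²` and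
`c = f_{n+2}² = (4E+3G)²`. The relations `(4E+3G) b = G c + (4E+3G) a` and
`(E+G) c = (3E+2G) b + (E+G) a` have determinant `a`, so (as `a` is coprime to `b` and `c`) they
span all relations `x b + y c = z a`. Using them, every `μ b + ν c` is congruent mod `a` to a
smaller one with `(μ, ν)` in the L-shaped box `{μ < 4E+3G, ν < E} ∪ {μ, ν < E+G}`, whose largest
value is `(4E+3G-1) b + (E-1) c`; hence every integer above that value minus `a` lies in `S(n)`.
Conversely, a representation of that value minus `a` would give a relation with `x > -(4E+3G)`,
`y > -E` and `z < 0`, and the lattice has no such point.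
-/

open Nat

/-- Membership of an integer in the numerical semigroup
`S(n) = ⟨fib n ^ 2, fib (n+1) ^ 2, fib (n+2) ^ 2⟩`. -/
def SZ (n : ℕ) : Set ℤ :=
  {x | ∃ a b c : ℕ, x = (a : ℤ) * (fib n : ℤ) ^ 2 + (b : ℤ) * (fib (n + 1) : ℤ) ^ 2 +
      (c : ℤ) * (fib (n + 2) : ℤ) ^ 2}

def natSpan3 (a b c : ℤ) : Set ℤ :=
  {x | ∃ i j k : ℕ, x = i * a + j * b + k * c}

theorem SZ_eq_natSpan3 (n : ℕ) :
    SZ n = natSpan3 ((fib n : ℤ) ^ 2) ((fib (n + 1) : ℤ) ^ 2) ((fib (n + 2) : ℤ) ^ 2) :=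
  rfl

lemma mem_natSpan3_of_modEq {a b c m : ℤ} (ha : 0 ≤ a) (j k : ℕ)
    (hmod : j * b + k * c ≡ m [ZMOD a]) (hlt : j * b + k * c - a < m) :
    m ∈ natSpan3 a b c := by
  obtain ⟨l, hl⟩ := hmod.dvd
  have hl : 0 ≤ l := by
    have : 0 < a * (l + 1) := by linarith
    linarith [pos_of_mul_pos_right this ha]
  lift l to ℕ using hl
  exact ⟨l, j, k, by linarith⟩

lemma exists_natCast_mul_modEq {a b : ℤ} (ha : a ≠ 0) (hab : IsCoprime a b) (m : ℤ) :
    ∃ j : ℕ, j * b ≡ m [ZMOD a] := by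
  obtain ⟨u, v, huv⟩ := hab
  refine ⟨(m * v % a).toNat, ?_⟩
  rw [Int.toNat_of_nonneg (Int.emod_nonneg _ ha)]
  calc m * v % a * b ≡ m * v * b [ZMOD a] := (Int.mod_modEq _ _).mul_right _
    _ = m + a * (-(m * u)) := by linear_combination m * huv
    _ ≡ m [ZMOD a] := Int.modEq_add_fac_self

section AperyBox

variable {E G : ℕ}

/-- The box has `(2E+G)²` points: `{μ b + ν c | AperyBox E G μ ν}` is the Apéry set of
`⟨a, b, c⟩` with respect to `a`. -/
def AperyBox (E G μ ν : ℕ) : Prop :=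
  (μ < 4 * E + 3 * G ∧ ν < E) ∨ (μ < E + G ∧ ν < E + G)

/- Each step removes one of the two relations or their sum, `(E+G) b + E c = (5E+4G) a`;
each of them lowers `μ + 3ν`. -/
theorem exists_aperyBox_eq_add_mul (hE : 0 < E) (hG : 0 < G) (μ ν : ℕ) :
    ∃ μ' ν' k : ℕ, AperyBox E G μ' ν' ∧
      μ * (2 * E + 2 * G) ^ 2 + ν * (4 * E + 3 * G) ^ 2 =
        μ' * (2 * E + 2 * G) ^ 2 + ν' * (4 * E + 3 * G) ^ 2 + k * (2 * E + G) ^ 2 := by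
  by_cases h₁ : 4 * E + 3 * G ≤ μ
  · obtain ⟨μ₁, rfl⟩ := Nat.exists_eq_add_of_le' h₁
    obtain ⟨μ', ν', k, hbox, hk⟩ := exists_aperyBox_eq_add_mul hE hG μ₁ (ν + G)
    refine ⟨μ', ν', k + (4 * E + 3 * G), hbox, ?_⟩
    calc _ = μ₁ * (2 * E + 2 * G) ^ 2 + (ν + G) * (4 * E + 3 * G) ^ 2
          + (4 * E + 3 * G) * (2 * E + G) ^ 2 := by ring
      _ = _ := by rw [hk]; ring
  by_cases h₂ : E + G ≤ ν
  · obtain ⟨ν₁, rfl⟩ := Nat.exists_eq_add_of_le' h₂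
    obtain ⟨μ', ν', k, hbox, hk⟩ := exists_aperyBox_eq_add_mul hE hG (μ + (3 * E + 2 * G)) ν₁
    refine ⟨μ', ν', k + (E + G), hbox, ?_⟩
    calc _ = (μ + (3 * E + 2 * G)) * (2 * E + 2 * G) ^ 2 + ν₁ * (4 * E + 3 * G) ^ 2
          + (E + G) * (2 * E + G) ^ 2 := by ring
      _ = _ := by rw [hk]; ring
  by_cases h₃ : E + G ≤ μ ∧ E ≤ ν
  · obtain ⟨⟨μ₁, rfl⟩, ⟨ν₁, rfl⟩⟩ := And.imp Nat.exists_eq_add_of_le' Nat.exists_eq_add_of_le' h₃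
    obtain ⟨μ', ν', k, hbox, hk⟩ := exists_aperyBox_eq_add_mul hE hG μ₁ ν₁
    refine ⟨μ', ν', k + (5 * E + 4 * G), hbox, ?_⟩
    calc _ = μ₁ * (2 * E + 2 * G) ^ 2 + ν₁ * (4 * E + 3 * G) ^ 2
          + (5 * E + 4 * G) * (2 * E + G) ^ 2 := by ring
      _ = _ := by rw [hk]; ring
  exact ⟨μ, ν, 0, by unfold AperyBox; omega, by ring⟩
termination_by μ + 3 * ν

theorem AperyBox.succ_mul_add_succ_mul_le {μ ν : ℕ} (hbox : AperyBox E G μ ν) (hGE : G ≤ 4 * E) :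
    (μ + 1) * (2 * E + 2 * G) ^ 2 + (ν + 1) * (4 * E + 3 * G) ^ 2 ≤
      (4 * E + 3 * G) * (2 * E + 2 * G) ^ 2 + E * (4 * E + 3 * G) ^ 2 := by
  rcases hbox with ⟨hμ, hν⟩ | ⟨hμ, hν⟩
  · exact Nat.add_le_add (Nat.mul_le_mul_right _ hμ) (Nat.mul_le_mul_right _ hν)
  · have hc : G * (4 * E + 3 * G) ^ 2 ≤ (3 * E + 2 * G) * (2 * E + 2 * G) ^ 2 := by
      nlinarith [Nat.mul_le_mul_left (G ^ 2) hGE]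
    calc _ ≤ (E + G) * (2 * E + 2 * G) ^ 2 + (E + G) * (4 * E + 3 * G) ^ 2 := by
          exact Nat.add_le_add (Nat.mul_le_mul_right _ hμ) (Nat.mul_le_mul_right _ hν)
      _ ≤ _ := by nlinarith

end AperyBox

section FibonacciLike

variable {E G : ℤ}

lemma isCoprime_sq_of_isCoprime (h : IsCoprime (2 * E) G) :
    IsCoprime ((2 * E + G) ^ 2) ((2 * E + 2 * G) ^ 2) ∧
      IsCoprime ((2 * E + G) ^ 2) ((4 * E + 3 * G) ^ 2) := by
  have hG : IsCoprime (2 * E + G) G := by simpa using h.add_mul_left_left 1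
  refine ⟨IsCoprime.pow ?_, IsCoprime.pow ?_⟩
  · rw [show 2 * E + 2 * G = G + (2 * E + G) * 1 by ring]
    exact hG.add_mul_left_right 1
  · rw [show 4 * E + 3 * G = G + (2 * E + G) * 2 by ring]
    exact hG.add_mul_left_right 2

lemma exists_relation_coeffs (hE : 0 ≤ E) (hG : 0 < G) (h : IsCoprime (2 * E) G) {x y z : ℤ}
    (hxyz : x * (2 * E + 2 * G) ^ 2 + y * (4 * E + 3 * G) ^ 2 = z * (2 * E + G) ^ 2) :
    ∃ s t : ℤ, x = s * (4 * E + 3 * G) - t * (3 * E + 2 * G) ∧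
      y = t * (E + G) - s * G ∧ z = s * (4 * E + 3 * G) + t * (E + G) := by
  obtain ⟨hab, hac⟩ := isCoprime_sq_of_isCoprime h
  have ha : (2 * E + G) ^ 2 ≠ 0 := by positivity
  obtain ⟨s, hs⟩ : (2 * E + G) ^ 2 ∣ x * (E + G) + y * (3 * E + 2 * G) :=
    hab.dvd_of_dvd_mul_left ⟨(z - y) * (E + G), by linear_combination (E + G) * hxyz⟩
  obtain ⟨t, ht⟩ : (2 * E + G) ^ 2 ∣ x * G + y * (4 * E + 3 * G) :=
    hac.dvd_of_dvd_mul_left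
      ⟨(z - x) * (4 * E + 3 * G), by linear_combination (4 * E + 3 * G) * hxyz⟩
  refine ⟨s, t, mul_left_cancel₀ ha ?_, mul_left_cancel₀ ha ?_, mul_left_cancel₀ ha ?_⟩
  · linear_combination (4 * E + 3 * G) * hs - (3 * E + 2 * G) * ht
  · linear_combination (E + G) * ht - G * hs
  · linear_combination -hxyz + (4 * E + 3 * G) * hs + (E + G) * ht

lemma nonneg_of_relation (hE : 0 ≤ E) (hG : 0 < G) (h : IsCoprime (2 * E) G) {x y z : ℤ}
    (hxyz : x * (2 * E + 2 * G) ^ 2 + y * (4 * E + 3 * G) ^ 2 = z * (2 * E + G) ^ 2)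
    (hx : -(4 * E + 3 * G) < x) (hy : -E < y) : 0 ≤ z := by
  obtain ⟨s, t, rfl, rfl, rfl⟩ := exists_relation_coeffs hE hG h hxyz
  by_contra! hz
  -- `s ≥ 0` and `z < 0` force `t < 0`, against `y > -E`;
  -- `s < 0` and `y > -E` force `t > s`, against `x > -(4E+3G)`.
  rcases le_or_gt 0 s with hs | hs
  · have ht : t < 0 := by nlinarith
    nlinarith
  · have hst : s < t := by nlinarith
    nlinarith

theorem frobenius_not_mem_natSpan3 (hE : 0 ≤ E) (hG : 0 < G) (h : IsCoprime (2 * E) G) :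
    (4 * E + 3 * G - 1) * (2 * E + 2 * G) ^ 2 + (E - 1) * (4 * E + 3 * G) ^ 2 - (2 * E + G) ^ 2 ∉
      natSpan3 ((2 * E + G) ^ 2) ((2 * E + 2 * G) ^ 2) ((4 * E + 3 * G) ^ 2) := by
  rintro ⟨A, B, C, hABC⟩
  have := nonneg_of_relation hE hG h (x := B - (4 * E + 3 * G - 1)) (y := C - (E - 1))
    (z := -(A + 1)) (by linear_combination -hABC) (by omega) (by omega)
  omega

theorem mem_natSpan3_of_frobenius_lt (hE : 0 < E) (hG : 0 < G) (hGE : G ≤ 4 * E)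
    (h : IsCoprime (2 * E) G) {m : ℤ}
    (hm : (4 * E + 3 * G - 1) * (2 * E + 2 * G) ^ 2 + (E - 1) * (4 * E + 3 * G) ^ 2
      - (2 * E + G) ^ 2 < m) :
    m ∈ natSpan3 ((2 * E + G) ^ 2) ((2 * E + 2 * G) ^ 2) ((4 * E + 3 * G) ^ 2) := by
  obtain ⟨j, hj⟩ := exists_natCast_mul_modEq (by positivity) (isCoprime_sq_of_isCoprime h).1 m
  lift E to ℕ using hE.le
  lift G to ℕ using hG.le
  obtain ⟨μ, ν, k, hbox, hk⟩ :=
    exists_aperyBox_eq_add_mul (E := E) (G := G) (by omega) (by omega) j 0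
  have hle := hbox.succ_mul_add_succ_mul_le (by omega)
  zify at hk hle
  refine mem_natSpan3_of_modEq (by positivity) μ ν (Int.ModEq.trans ?_ hj) (by linarith)
  calc _ ≡ _ + (2 * (E : ℤ) + G) ^ 2 * k [ZMOD (2 * (E : ℤ) + G) ^ 2] :=
        Int.modEq_add_fac_self.symm
    _ = _ := by linear_combination -hk

end FibonacciLike

theorem frobenius_Sn_of_mod_three_eq_two (n : ℕ) (hn : 5 ≤ n) (h3 : n % 3 = 2) :
    (((fib (n + 2) : ℤ) - 1) * (fib (n + 1) : ℤ) ^ 2 +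
        ((fib (n - 2) : ℤ) / 2 - 1) * (fib (n + 2) : ℤ) ^ 2 - (fib n : ℤ) ^ 2) ∉ SZ n ∧
    ∀ m : ℤ,
      (((fib (n + 2) : ℤ) - 1) * (fib (n + 1) : ℤ) ^ 2 +
        ((fib (n - 2) : ℤ) / 2 - 1) * (fib (n + 2) : ℤ) ^ 2 - (fib n : ℤ) ^ 2) < m →
      m ∈ SZ n := by
  obtain ⟨k, rfl⟩ : ∃ k, n = k + 3 := ⟨n - 3, by omega⟩
  obtain ⟨E, hE⟩ : 2 ∣ fib (k + 1) := fib_dvd 3 (k + 1) (by omega)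
  set G := fib (k + 2)
  have hfib₃ : fib (k + 3) = 2 * E + G := by rw [fib_add_two, hE]
  have hfib₄ : fib (k + 4) = 2 * E + 2 * G := by rw [fib_add_two, hfib₃]; ring
  have hfib₅ : fib (k + 5) = 4 * E + 3 * G := by rw [fib_add_two, hfib₃, hfib₄]; ring
  have hhalf : (fib (k + 3 - 2) : ℤ) / 2 = E := by simp [hE]
  have hEpos : 0 < (E : ℤ) := by
    have : fib 3 ≤ 2 * E := hE ▸ fib_mono (by omega)
    rw [show fib 3 = 2 from rfl] at this
    omega
  have hGpos : 0 < (G : ℤ) := by exact_mod_cast fib_pos.2 (by omega)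
  have hGE : (G : ℤ) ≤ 4 * E := by
    have : fib (k + 2) ≤ 2 * fib (k + 1) := by rw [fib_add_two]; linarith [fib_mono k.le_succ]
    omega
  have hcop : IsCoprime (2 * (E : ℤ)) G := by
    have := Nat.isCoprime_iff_coprime.2 (fib_coprime_fib_succ (k + 1))
    rwa [hE, Nat.cast_mul, Nat.cast_two] at this
  rw [SZ_eq_natSpan3, hhalf, hfib₃, hfib₄, hfib₅]
  push_cast
  exact ⟨frobenius_not_mem_natSpan3 hEpos.le hGpos hcop,
    fun m hm => mem_natSpan3_of_frobenius_lt hEpos hGpos hGE hcop hm⟩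
end

section
/- For every integer n ≥ 4 with n ≡ 1 (mod 3), the Frobenius number of S(n) = ⟨f_n², f_{n+1}², f_{n+2}²⟩ equals (f_{n+2}/2 − 1)·f_{n+1}² + ((f_{n−2} + f_n)/2 − 1)·f_{n+2}² − f_n²; that is, this integer does not belong to S(n) and every strictly larger integer belongs to S(n). (Note that f_{n+2} and f_{n−2} + f_n are even when n ≡ 1 (mod 3).) -/
/-!
Write `v = u + 2p` with `u` odd and coprime to `v`. The pairs `(e, d)` with
`u² ∣ e v² + d (u + v)²` form the lattice spanned by `(u + p, -p)` and `(p, u - p)`, of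
determinant `u²`, and the L-shaped region `[0, p) × [0, u) ∪ [p, u + p) × [0, u - p)` of area
`u²` is a fundamental domain for it. Hence the values `y v² + z (u + v)²` at its points meet
every residue class mod `u²`; when `3p ≤ u` they are all bounded by the value at the corner
`(u + p - 1, u - p - 1)`, and that corner value is the least element of the semigroup
`⟨u², v², (u + v)²⟩` in its class. So the Frobenius number is the corner value minus `u²`.
For `n ≡ 1 (mod 3)` take `u = f_n`, `v = f_{n+1}`, `p = f_{n-1} / 2`.
-/

open Nat

def sqSemigroup (u v : ℤ) : Set ℤ :=
  {x | ∃ a b c : ℕ, x = a * u ^ 2 + b * v ^ 2 + c * (u + v) ^ 2}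

theorem SZ_eq_sqSemigroup (n : ℕ) : SZ n = sqSemigroup (fib n) (fib (n + 1)) := by
  simp only [SZ, sqSemigroup, fib_add_two, Nat.cast_add]

def sqComb (u v : ℤ) (P : ℤ × ℤ) : ℤ := P.1 * v ^ 2 + P.2 * (u + v) ^ 2

noncomputable def lShape (u p : ℤ) : Finset (ℤ × ℤ) :=
  Finset.Ico 0 p ×ˢ Finset.Ico 0 u ∪ Finset.Ico p (u + p) ×ˢ Finset.Ico 0 (u - p)

section

variable {u v p : ℤ}

theorem mem_lShape {y z : ℤ} (hp : 0 ≤ p) :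
    (y, z) ∈ lShape u p ↔
      0 ≤ y ∧ y < u + p ∧ 0 ≤ z ∧ z < u ∧ (y < p ∨ z < u - p) := by
  simp only [lShape, Finset.mem_union, Finset.mem_product, Finset.mem_Ico]
  omega

theorem card_lShape (hp : 0 ≤ p) (hpu : p ≤ u) : (lShape u p).card = (u ^ 2).toNat := by
  have hdisj : Disjoint (Finset.Ico 0 p ×ˢ Finset.Ico 0 u)
      (Finset.Ico p (u + p) ×ˢ Finset.Ico 0 (u - p)) := by
    rw [Finset.disjoint_left]
    simp only [Finset.mem_product, Finset.mem_Ico]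
    omega
  rw [lShape, Finset.card_union_of_disjoint hdisj, Finset.card_product, Finset.card_product,
    Int.card_Ico, Int.card_Ico, Int.card_Ico, Int.card_Ico]
  zify
  rw [Int.toNat_of_nonneg (by omega), Int.toNat_of_nonneg (by omega),
    Int.toNat_of_nonneg (by omega), Int.toNat_of_nonneg (by omega),
    Int.toNat_of_nonneg (sq_nonneg u)]
  ring

theorem exists_lattice_coords_of_sq_dvd {e d : ℤ} (hu : Odd u) (hcop : IsCoprime u v)
    (hv : v = u + 2 * p) (h : u ^ 2 ∣ e * v ^ 2 + d * (u + v) ^ 2) :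
    ∃ a b : ℤ, e = a * (u + p) + b * p ∧ d = b * (u - p) - a * p := by
  have hu0 : u ≠ 0 := by rintro rfl; exact Int.not_odd_zero hu
  obtain ⟨k, hk⟩ : u ∣ e + d := by
    refine (hcop.pow_right (n := 2)).dvd_of_dvd_mul_right ?_
    rw [show (e + d) * v ^ 2 = e * v ^ 2 + d * (u + v) ^ 2 - u * (d * (u + 2 * v)) by ring]
    exact dvd_sub ((dvd_pow_self u two_ne_zero).trans h) (dvd_mul_right _ _)
  obtain ⟨b, hb⟩ : u ∣ k * p + d := by
    have h1 : u * u ∣ u * (v * (k * v + 2 * d)) := by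
      rw [show u * (v * (k * v + 2 * d)) = e * v ^ 2 + d * (u + v) ^ 2 - u ^ 2 * d by
        linear_combination -v ^ 2 * hk]
      exact dvd_sub (by rwa [← sq]) ⟨d, by ring⟩
    have h2 : u ∣ 2 * (k * p + d) := by
      rw [show 2 * (k * p + d) = k * v + 2 * d - u * k by rw [hv]; ring]
      exact dvd_sub (hcop.dvd_of_dvd_mul_left ((mul_dvd_mul_iff_left hu0).mp h1))
        (dvd_mul_right _ _)
    exact (Int.isCoprime_two_right.mpr hu).dvd_of_dvd_mul_left h2
  exact ⟨k - b, b, by linear_combination hk - hb, by linear_combination hb⟩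

theorem lattice_coords_eq_zero_of_mem_lShape {y z y' z' a b : ℤ} (hp : 0 ≤ p) (hpu : p ≤ u)
    (hP : (y, z) ∈ lShape u p) (hP' : (y', z') ∈ lShape u p)
    (he : y' - y = a * (u + p) + b * p) (hd : z' - z = b * (u - p) - a * p) :
    a = 0 ∧ b = 0 := by
  rw [mem_lShape hp] at hP hP'
  -- Opposite signs of `a, b` force `|z' - z| ≥ u`; equal signs, or `b = 0 ≠ a`, force
  -- `|y' - y| ≥ u + p`; and `a = 0 ≠ b` moves one point by at least `(p, u - p)`, out of the
  -- L-shape.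
  have hup : 0 ≤ u + p := by omega
  have hum : 0 ≤ u - p := by omega
  rcases lt_trichotomy a 0 with ha | rfl | ha <;> rcases lt_trichotomy b 0 with hb | rfl | hb
  all_goals first
    | exact ⟨rfl, rfl⟩
    | nlinarith
    | (rcases hP.2.2.2.2 with h | h <;> nlinarith)
    | (rcases hP'.2.2.2.2 with h | h <;> nlinarith)

-- `u² (a (u + p) + b (4u + 5p))` is the value `sqComb u v` of the lattice vector
-- `a (u + p, -p) + b (p, u - p)`.
theorem lattice_value_nonneg {a b : ℤ} (hp : 0 ≤ p) (hpu : p < u)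
    (he : 1 - (u + p) ≤ a * (u + p) + b * p) (hd : 1 - (u - p) ≤ b * (u - p) - a * p) :
    0 ≤ a * (u + p) + b * (4 * u + 5 * p) := by
  have hup : 0 ≤ u + p := by omega
  have hum : 0 < u - p := by omega
  rcases lt_trichotomy a 0 with ha | rfl | ha <;> rcases lt_trichotomy b 0 with hb | rfl | hb
  all_goals nlinarith

theorem sqComb_corner_le_of_sq_dvd_sub {Y Z : ℤ} (hu : Odd u) (hcop : IsCoprime u v)
    (hv : v = u + 2 * p) (hp : 0 ≤ p) (hpu : p < u) (hY : 0 ≤ Y) (hZ : 0 ≤ Z)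
    (h : u ^ 2 ∣ sqComb u v (Y, Z) - sqComb u v (u + p - 1, u - p - 1)) :
    sqComb u v (u + p - 1, u - p - 1) ≤ sqComb u v (Y, Z) := by
  have hsub : sqComb u v (Y, Z) - sqComb u v (u + p - 1, u - p - 1) =
      (Y - (u + p - 1)) * v ^ 2 + (Z - (u - p - 1)) * (u + v) ^ 2 := by
    simp only [sqComb]; ring
  obtain ⟨a, b, he, hd⟩ := exists_lattice_coords_of_sq_dvd hu hcop hv (hsub ▸ h)
  have hval : sqComb u v (Y, Z) - sqComb u v (u + p - 1, u - p - 1) =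
      u ^ 2 * (a * (u + p) + b * (4 * u + 5 * p)) := by
    rw [hsub, he, hd, hv]; ring
  have := lattice_value_nonneg hp hpu (a := a) (b := b) (by linarith) (by linarith)
  nlinarith [sq_nonneg u]

theorem exists_mem_lShape_sq_dvd_sub (hu : Odd u) (hcop : IsCoprime u v)
    (hv : v = u + 2 * p) (hp : 0 ≤ p) (hpu : p ≤ u) (m : ℤ) :
    ∃ P ∈ lShape u p, u ^ 2 ∣ m - sqComb u v P := by
  have hu2 : 0 < u ^ 2 := by
    have : u ≠ 0 := by rintro rfl; exact Int.not_odd_zero hu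
    positivity
  have hinj : Set.InjOn (fun P => sqComb u v P % u ^ 2) (lShape u p) := by
    rintro ⟨y, z⟩ hP ⟨y', z'⟩ hP' h
    have hdvd : u ^ 2 ∣ (y' - y) * v ^ 2 + (z' - z) * (u + v) ^ 2 := by
      have := Int.ModEq.dvd h
      simp only [sqComb] at this
      convert this using 1; ring
    obtain ⟨a, b, he, hd⟩ := exists_lattice_coords_of_sq_dvd hu hcop hv hdvd
    obtain ⟨rfl, rfl⟩ := lattice_coords_eq_zero_of_mem_lShape hp hpu hP hP' he hd
    simp only [Prod.mk.injEq]
    constructor <;> linarith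
  have hmaps : Set.MapsTo (fun P => sqComb u v P % u ^ 2) (lShape u p) (Finset.Ico 0 (u ^ 2)) :=
    fun P _ => Finset.mem_Ico.2 ⟨Int.emod_nonneg _ hu2.ne', Int.emod_lt_of_pos _ hu2⟩
  have hcard : (Finset.Ico 0 (u ^ 2)).card ≤ (lShape u p).card := by
    rw [Int.card_Ico, card_lShape hp hpu, sub_zero]
  obtain ⟨P, hP, hPm⟩ := Finset.surjOn_of_injOn_of_card_le _ hmaps hinj hcard
    (Finset.mem_Ico.2 ⟨Int.emod_nonneg m hu2.ne', Int.emod_lt_of_pos m hu2⟩)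
  exact ⟨P, hP, Int.ModEq.dvd hPm⟩

theorem sqComb_le_corner_of_mem_lShape {P : ℤ × ℤ} (hv : v = u + 2 * p) (hp : 0 ≤ p)
    (h3p : 3 * p ≤ u) (hP : P ∈ lShape u p) :
    sqComb u v P ≤ sqComb u v (u + p - 1, u - p - 1) := by
  obtain ⟨y, z⟩ := P
  rw [mem_lShape hp] at hP
  obtain ⟨hy0, hy, hz0, hz, hy | hz'⟩ := hP
  · have hcubic : p * (u + v) ^ 2 ≤ u * v ^ 2 := by
      rw [hv]
      have ht : 0 ≤ u - 3 * p := by omega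
      -- with `t = u - 3p` the difference is `11p³ + 23p²t + 9pt² + t³`
      nlinarith [mul_nonneg (mul_nonneg hp hp) hp, mul_nonneg (mul_nonneg hp hp) ht,
        mul_nonneg hp (mul_nonneg ht ht), mul_nonneg ht (mul_nonneg ht ht)]
    simp only [sqComb]
    nlinarith [mul_le_mul_of_nonneg_right (show y ≤ p - 1 by omega) (sq_nonneg v),
      mul_le_mul_of_nonneg_right (show z ≤ u - 1 by omega) (sq_nonneg (u + v))]
  · simp only [sqComb]
    nlinarith [mul_le_mul_of_nonneg_right (show y ≤ u + p - 1 by omega) (sq_nonneg v),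
      mul_le_mul_of_nonneg_right (show z ≤ u - p - 1 by omega) (sq_nonneg (u + v))]

theorem isGreatest_compl_sqSemigroup (hu : Odd u) (hcop : IsCoprime u v)
    (hv : v = u + 2 * p) (hp : 0 ≤ p) (h3p : 3 * p ≤ u) :
    IsGreatest (sqSemigroup u v)ᶜ (sqComb u v (u + p - 1, u - p - 1) - u ^ 2) := by
  have hpu : p < u := by rcases hu with ⟨k, rfl⟩; omega
  constructor
  · rintro ⟨A, B, C, hABC⟩
    simp only [sqComb] at hABC
    have hle := sqComb_corner_le_of_sq_dvd_sub hu hcop hv hp hpu (Int.natCast_nonneg B)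
      (Int.natCast_nonneg C) ⟨-(A + 1), by simp only [sqComb]; linear_combination -hABC⟩
    simp only [sqComb] at hle
    nlinarith [mul_nonneg (Int.natCast_nonneg A) (sq_nonneg u)]
  · intro m hm
    by_contra! hlt
    obtain ⟨⟨y, z⟩, hP, x, hx⟩ := exists_mem_lShape_sq_dvd_sub hu hcop hv hp hpu.le m
    have hle := sqComb_le_corner_of_mem_lShape hv hp h3p hP
    rw [mem_lShape hp] at hP
    have hx0 : 0 ≤ x := by
      have : 0 < u ^ 2 * (x + 1) := by linarith
      have := pos_of_mul_pos_right this (sq_nonneg u)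
      omega
    refine hm ⟨x.toNat, y.toNat, z.toNat, ?_⟩
    simp only [Int.toNat_of_nonneg hx0, Int.toNat_of_nonneg hP.1, Int.toNat_of_nonneg hP.2.2.1]
    simp only [sqComb] at hx
    linear_combination hx

end

theorem odd_fib_of_mod_three_ne_zero {n : ℕ} (hn : n % 3 ≠ 0) : Odd (fib n) := by
  have hcop : Nat.Coprime n 3 :=
    ((Nat.Prime.coprime_iff_not_dvd Nat.prime_three).2 (by omega)).symm
  rw [← Nat.coprime_two_right, Nat.Coprime, show 2 = fib 3 from rfl, ← Nat.fib_gcd,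
    hcop.gcd_eq_one, fib_one]

theorem three_mul_fib_add_two_le (n : ℕ) : 3 * fib (n + 2) ≤ 2 * fib (n + 3) := by
  have := Nat.fib_mono (show n ≤ n + 1 by omega)
  rw [fib_add_two (n := n + 1), fib_add_two (n := n)]
  omega

theorem frobenius_Sn_of_mod_three_eq_one (n : ℕ) (hn : 4 ≤ n) (h3 : n % 3 = 1) :
    (((fib (n + 2) : ℤ) / 2 - 1) * (fib (n + 1) : ℤ) ^ 2 +
        (((fib (n - 2) : ℤ) + (fib n : ℤ)) / 2 - 1) * (fib (n + 2) : ℤ) ^ 2 -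
        (fib n : ℤ) ^ 2) ∉ SZ n ∧
    ∀ m : ℤ,
      (((fib (n + 2) : ℤ) / 2 - 1) * (fib (n + 1) : ℤ) ^ 2 +
        (((fib (n - 2) : ℤ) + (fib n : ℤ)) / 2 - 1) * (fib (n + 2) : ℤ) ^ 2 -
        (fib n : ℤ) ^ 2) < m →
      m ∈ SZ n := by
  obtain ⟨j, rfl⟩ : ∃ j, n = j + 3 := ⟨n - 3, by omega⟩
  obtain ⟨p, hp⟩ : 2 ∣ fib (j + 2) := Nat.fib_dvd 3 (j + 2) (by omega)
  set u : ℤ := (fib (j + 3) : ℤ)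
  have hv : (fib (j + 4) : ℤ) = u + 2 * p := by
    rw [fib_add_two (n := j + 2), hp]; push_cast; ring
  have key := isGreatest_compl_sqSemigroup
    (Int.odd_coe_nat _ |>.2 (odd_fib_of_mod_three_ne_zero (by omega)))
    (Nat.isCoprime_iff_coprime.2 (Nat.fib_coprime_fib_succ (j + 3))) hv (by positivity)
    (by have := three_mul_fib_add_two_le j; rw [hp] at this; omega)
  have hsum : (fib (j + 5) : ℤ) = 2 * (u + p) := by
    rw [fib_add_two (n := j + 3)]; push_cast; rw [hv]; ring
  have hdiff : (fib (j + 1) : ℤ) + u = 2 * (u - p) := by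
    have : fib (j + 1) + fib (j + 2) = fib (j + 3) := fib_add_two.symm
    rw [hp] at this; push_cast [u, ← this]; ring
  have hF : ((fib (j + 5) : ℤ) / 2 - 1) * (fib (j + 4) : ℤ) ^ 2 +
      (((fib (j + 1) : ℤ) + u) / 2 - 1) * (fib (j + 5) : ℤ) ^ 2 - u ^ 2 =
      sqComb u (fib (j + 4)) (u + p - 1, u - p - 1) - u ^ 2 := by
    rw [hsum, hdiff, Int.mul_ediv_cancel_left _ two_ne_zero,
      Int.mul_ediv_cancel_left _ two_ne_zero, sqComb, hv]
    ring
  rw [show j + 3 - 2 = j + 1 by omega, hF, SZ_eq_sqSemigroup]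
  exact ⟨key.1, fun m hm => by_contra fun h => not_lt.2 (key.2 h) hm⟩
end

section
/- Let n ≥ 4 with n ≡ 1 (mod 3) (so that f_{n+2}, f_{n−1} and f_{n+5} are even and f_{n−2} + f_n is even). Then the following three identities hold: (1) (f_{n+5}/2)·f_n² = (f_{n−1}/2)·f_{n+1}² + ((f_{n−2} + f_n)/2)·f_{n+2}²; (2) (f_{n+2}/2)·f_{n+1}² = (f_{n+2}/2)·f_n² + (f_{n−1}/2)·f_{n+2}²; (3) f_n·f_{n+2}² = f_{n+3}·f_n² + f_n·f_{n+1}². -/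
/-! Since `f_{n+2} - f_{n+1} = f_n` and `f_{n+2} + f_{n+1} = f_{n+3}`, a difference of squares
gives `f_{n+2}² = f_{n+1}² + f_n f_{n+3}`; multiplied by `f_n` this is (3), and one index lower it
gives (2). Identity (1) is a cubic identity in two consecutive Fibonacci numbers. All three hold for
every `n` before halving; the halving is exact because, for `n ≡ 1 (mod 3)`, each halved
coefficient is some `f_j` with `3 ∣ j`, or `f_{n-2} + f_n = 2 f_{n-2} + f_{n-1}`. -/

open Nat

namespace Nat

theorem fib_add_two_sq (n : ℕ) : fib (n + 2) ^ 2 = fib (n + 1) ^ 2 + fib n * fib (n + 3) := by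
  have h3 : fib (n + 3) = fib (n + 1) + fib (n + 2) := fib_add_two
  rw [h3, fib_add_two]
  ring

theorem fib_add_seven_mul_fib_add_two_sq (n : ℕ) :
    fib (n + 7) * fib (n + 2) ^ 2 =
      fib (n + 1) * fib (n + 3) ^ 2 + (fib n + fib (n + 2)) * fib (n + 4) ^ 2 := by
  have h (j : ℕ) : fib (n + j + 1) = fib n * fib j + fib (n + 1) * fib (j + 1) := fib_add n j
  rw [h 6, h 1, h 2, h 3]
  norm_num [fib_add_two]
  ring

theorem two_dvd_fib_of_three_dvd {n : ℕ} (h : 3 ∣ n) : 2 ∣ fib n :=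
  isDvdSequence_fib 3 n h

end Nat

theorem div_two_mul_eq_of_two_dvd {a b c x y z : ℕ} (ha : 2 ∣ a) (hb : 2 ∣ b) (hc : 2 ∣ c)
    (h : a * x = b * y + c * z) : a / 2 * x = b / 2 * y + c / 2 * z := by
  obtain ⟨a, rfl⟩ := ha
  obtain ⟨b, rfl⟩ := hb
  obtain ⟨c, rfl⟩ := hc
  simp only [Nat.mul_div_cancel_left _ two_pos]
  linarith

theorem fib_sq_identities_of_mod_three_eq_one (n : ℕ) (hn : 4 ≤ n) (h3 : n % 3 = 1) :
    (fib (n + 5) / 2) * fib n ^ 2 =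
      (fib (n - 1) / 2) * fib (n + 1) ^ 2 + ((fib (n - 2) + fib n) / 2) * fib (n + 2) ^ 2 ∧
    (fib (n + 2) / 2) * fib (n + 1) ^ 2 =
      (fib (n + 2) / 2) * fib n ^ 2 + (fib (n - 1) / 2) * fib (n + 2) ^ 2 ∧
    fib n * fib (n + 2) ^ 2 = fib (n + 3) * fib n ^ 2 + fib n * fib (n + 1) ^ 2 := by
  obtain ⟨k, rfl⟩ : ∃ k, n = k + 2 := ⟨n - 2, by omega⟩
  simp only [show k + 2 - 1 = k + 1 by omega, Nat.add_sub_cancel]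
  have fib_even (j : ℕ) (hj : j % 3 = (k + 1) % 3) : 2 ∣ fib j :=
    two_dvd_fib_of_three_dvd (by omega)
  have even_lucas : 2 ∣ fib k + fib (k + 2) := by
    rw [fib_add_two, ← add_assoc, ← two_mul]
    exact dvd_add (dvd_mul_right 2 _) (fib_even (k + 1) rfl)
  refine ⟨?_, ?_, ?_⟩
  · exact div_two_mul_eq_of_two_dvd (fib_even _ (by omega)) (fib_even _ rfl) even_lucas
      (fib_add_seven_mul_fib_add_two_sq k)
  · refine div_two_mul_eq_of_two_dvd (fib_even _ (by omega)) (fib_even _ (by omega))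
      (fib_even _ rfl) ?_
    rw [fib_add_two_sq (k + 1)]
    ring
  · rw [fib_add_two_sq (k + 2)]
    ring
end
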